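/- arXiv:2312.07154 — 6 statements merged into one kernel-verified Lean document; each statement's English description precedes it below -/
import Mathlib

section
/- Let 1 < p < ∞ and let (x_n) be a sequence in a Banach space X. The sequence (x_n) is weakly p-summable if and only if the series ∑ a_n x_n converges unconditionally in X for every sequence (a_n) ∈ ℓ_{p'}, where p' is the conjugate exponent of p. -/
open Filter Topology

section Defs

variable {Z : Type*} [NormedAddCommGroup Z] [NormedSpace ℝ Z]

/-- A sequence is weakly null: every continuous linear functional sends it to a null sequence. -/
def WeaklyNull (x : ℕ → Z) : Prop :=
  ∀ f : Z →L[ℝ] ℝ, Tendsto (fun n => f (x n)) atTop (𝓝 (0 : ℝ))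

/-- A sequence is weakly `p`-summable: every functional sends it into `ℓ_p`. -/
def WeaklyPSummable (p : ENNReal) (x : ℕ → Z) : Prop :=
  ∀ f : Z →L[ℝ] ℝ, Memℓp (fun n => f (x n)) p

/-- A set is limited: every weak*-null sequence of functionals tends to `0` uniformly on it. -/
def IsLimitedSet (A : Set Z) : Prop :=
  ∀ g : ℕ → Z →L[ℝ] ℝ, (∀ z : Z, Tendsto (fun k => g k z) atTop (𝓝 (0 : ℝ))) →
    ∀ ε > 0, ∃ N, ∀ k ≥ N, ∀ a ∈ A, |g k a| < ε

/-- A set is a Dunford–Pettis set: every weakly null sequence of functionals tends to `0`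
uniformly on it. -/
def IsDPSet (A : Set Z) : Prop :=
  ∀ g : ℕ → Z →L[ℝ] ℝ, WeaklyNull g →
    ∀ ε > 0, ∃ N, ∀ k ≥ N, ∀ a ∈ A, |g k a| < ε

end Defs

/-- Auxiliary "signed power" computation. -/
lemma sign_rpow_aux {p : ℝ} (hp : 1 < p) (b : ℝ) :
    (|b| ^ (p - 1) * (if 0 ≤ b then (1 : ℝ) else -1)) * b = |b| ^ p ∧
      |(|b| ^ (p - 1) * (if 0 ≤ b then (1 : ℝ) else -1))| = |b| ^ (p - 1) := by
  have hp1 : p - 1 ≠ 0 := by linarith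
  have hp0 : p ≠ 0 := by linarith
  constructor
  · rcases eq_or_ne b 0 with rfl | hb
    · simp [Real.zero_rpow hp1, Real.zero_rpow hp0]
    · have hb' : 0 < |b| := abs_pos.2 hb
      have h1 : (if 0 ≤ b then (1 : ℝ) else -1) * b = |b| := by
        split_ifs with h
        · rw [one_mul, abs_of_nonneg h]
        · rw [neg_one_mul, abs_of_neg (lt_of_not_ge h)]
      rw [mul_assoc, h1]
      calc |b| ^ (p - 1) * |b| = |b| ^ (p - 1) * |b| ^ (1 : ℝ) := by rw [Real.rpow_one]
        _ = |b| ^ (p - 1 + 1) := (Real.rpow_add hb' _ _).symm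
        _ = |b| ^ p := by ring_nf
  · rw [abs_mul]
    have : |(if 0 ≤ b then (1 : ℝ) else -1)| = 1 := by split_ifs <;> simp
    rw [this, mul_one, abs_of_nonneg (Real.rpow_nonneg (abs_nonneg b) _)]

theorem stmt2 {X : Type*} [NormedAddCommGroup X] [NormedSpace ℝ X] [CompleteSpace X]
    (p q : ℝ) (hpq : p.HolderConjugate q) [Fact (1 ≤ ENNReal.ofReal q)]
    (x : ℕ → X) :
    WeaklyPSummable (ENNReal.ofReal p) x ↔
      ∀ a : lp (fun _ : ℕ => ℝ) (ENNReal.ofReal q), Summable (fun n => a n • x n) := by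
  have hp1 : 1 < p := hpq.lt
  have hq1 : 1 < q := hpq.symm.lt
  have hp0 : 0 < p := hpq.pos
  have hq0 : 0 < q := hpq.symm.pos
  have hPto : (ENNReal.ofReal p).toReal = p := ENNReal.toReal_ofReal hp0.le
  have hQto : (ENNReal.ofReal q).toReal = q := ENNReal.toReal_ofReal hq0.le
  constructor
  · -- forward direction
    intro hW a
    let g : {sc : Finset ℕ × (ℕ → ℝ) // ∑ n ∈ sc.1, |sc.2 n| ^ q ≤ 1} →
        ((X →L[ℝ] ℝ) →L[ℝ] ℝ) :=
      fun i => ∑ n ∈ i.1.1, i.1.2 n • ContinuousLinearMap.apply ℝ ℝ (x n)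
    have hg : ∀ i (f : X →L[ℝ] ℝ), g i f = ∑ n ∈ i.1.1, i.1.2 n * f (x n) := by
      intro i f
      simp [g, ContinuousLinearMap.sum_apply, smul_eq_mul]
    obtain ⟨C, hC⟩ : ∃ C, ∀ i, ‖g i‖ ≤ C := by
      apply banach_steinhaus
      intro f
      have hs : Summable fun n => |f (x n)| ^ p := by
        have := (hW f).summable (by rw [hPto]; exact hp0)
        simpa [hPto] using this
      refine ⟨(∑' n, |f (x n)| ^ p) ^ (1 / p), fun i => ?_⟩
      rw [hg, Real.norm_eq_abs]
      calc |∑ n ∈ i.1.1, i.1.2 n * f (x n)|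
          ≤ ∑ n ∈ i.1.1, |i.1.2 n * f (x n)| := Finset.abs_sum_le_sum_abs _ _
        _ = ∑ n ∈ i.1.1, |f (x n)| * |i.1.2 n| := by
            simp only [abs_mul]; exact Finset.sum_congr rfl fun n _ => mul_comm _ _
        _ ≤ (∑ n ∈ i.1.1, |(|f (x n)|)| ^ p) ^ (1 / p) *
              (∑ n ∈ i.1.1, |(|i.1.2 n|)| ^ q) ^ (1 / q) :=
            Real.inner_le_Lp_mul_Lq i.1.1 _ _ hpq
        _ ≤ (∑' n, |f (x n)| ^ p) ^ (1 / p) * 1 := by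
            apply mul_le_mul
            · apply Real.rpow_le_rpow (by positivity) ?_ (one_div_nonneg.2 hp0.le)
              simp only [abs_abs]
              exact Summable.sum_le_tsum _ (fun n _ => by positivity) hs
            · apply Real.rpow_le_one (by positivity) ?_ (one_div_nonneg.2 hq0.le)
              simpa only [abs_abs] using i.2
            · exact Real.rpow_nonneg (Finset.sum_nonneg fun n _ =>
                Real.rpow_nonneg (abs_nonneg _) _) _
            · exact Real.rpow_nonneg (tsum_nonneg fun n =>
                Real.rpow_nonneg (abs_nonneg _) _) _
        _ = (∑' n, |f (x n)| ^ p) ^ (1 / p) := mul_one _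
    have hC0 : 0 ≤ C := le_trans (norm_nonneg (g ⟨(∅, 0), by simp⟩)) (hC _)
    have key : ∀ t : Finset ℕ,
        ‖∑ n ∈ t, a n • x n‖ ≤ C * (∑ n ∈ t, |a n| ^ q) ^ (1 / q) := by
      intro t
      set S := ∑ n ∈ t, |a n| ^ q with hSdef
      have hS0 : 0 ≤ S := by positivity
      rcases eq_or_lt_of_le hS0 with hS0' | hSpos
      · have hzero : ∀ n ∈ t, a n = 0 := by
          intro n hn
          have h := (Finset.sum_eq_zero_iff_of_nonneg (fun m _ => by positivity)).1
            hS0'.symm n hn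
          have := ((Real.rpow_eq_zero (abs_nonneg (a n)) hq0.ne').1 h)
          simpa [abs_eq_zero] using this
        have : ∑ n ∈ t, a n • x n = 0 :=
          Finset.sum_eq_zero fun n hn => by rw [hzero n hn, zero_smul]
        rw [this, norm_zero]
        exact mul_nonneg hC0 (Real.rpow_nonneg hS0 _)
      · set A := S ^ (1 / q) with hAdef
        have hApos : 0 < A := Real.rpow_pos_of_pos hSpos _
        have hAq : A ^ q = S := by
          rw [hAdef, ← Real.rpow_mul hS0, one_div_mul_cancel hq0.ne', Real.rpow_one]
        set c : ℕ → ℝ := fun n => a n / A with hc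
        have hconstr : ∑ n ∈ t, |c n| ^ q ≤ 1 := by
          have : ∑ n ∈ t, |c n| ^ q = S / A ^ q := by
            rw [Finset.sum_div]
            refine Finset.sum_congr rfl fun n hn => ?_
            rw [hc]
            rw [abs_div, Real.div_rpow (abs_nonneg _) (abs_nonneg _),
              abs_of_pos hApos]
          rw [this, hAq, div_self hSpos.ne']
        set y := ∑ n ∈ t, a n • x n with hy
        obtain ⟨f, hf1, hfy0⟩ := exists_dual_vector'' ℝ y
        have hfy : f y = ‖y‖ := by simpa using hfy0
        have hfy' : f y = ∑ n ∈ t, a n * f (x n) := by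
          rw [hy, map_sum]
          exact Finset.sum_congr rfl fun n _ => by rw [map_smul, smul_eq_mul]
        have hgi : g ⟨(t, c), hconstr⟩ f = ∑ n ∈ t, c n * f (x n) := hg _ f
        have hyA : ‖y‖ = A * g ⟨(t, c), hconstr⟩ f := by
          rw [← hfy, hfy', hgi, Finset.mul_sum]
          refine Finset.sum_congr rfl fun n _ => ?_
          rw [hc, ← mul_assoc, mul_div_cancel₀ _ hApos.ne']
        calc ‖y‖ = A * g ⟨(t, c), hconstr⟩ f := hyA
          _ ≤ A * ‖g ⟨(t, c), hconstr⟩ f‖ :=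
              mul_le_mul_of_nonneg_left (le_abs_self _) hApos.le
          _ ≤ A * (‖g ⟨(t, c), hconstr⟩‖ * ‖f‖) :=
              mul_le_mul_of_nonneg_left ((g _).le_opNorm f) hApos.le
          _ ≤ A * (C * 1) := by
              apply mul_le_mul_of_nonneg_left _ hApos.le
              exact mul_le_mul (hC _) hf1 (norm_nonneg _) hC0
          _ = C * A := by ring
    -- conclude summability
    rw [summable_iff_vanishing]
    intro e he
    rcases Metric.mem_nhds_iff.1 he with ⟨ε, εpos, hball⟩
    have hsa : Summable fun n => |a n| ^ q := by
      have := (lp.memℓp a).summable (by rw [hQto]; exact hq0)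
      simpa [hQto] using this
    obtain ⟨s, hs⟩ := (summable_iff_vanishing.1 hsa)
      (Metric.ball 0 ((ε / (C + 1)) ^ q))
      (Metric.ball_mem_nhds 0 (Real.rpow_pos_of_pos (div_pos εpos (by linarith)) q))
    refine ⟨s, fun t ht => ?_⟩
    apply hball
    rw [Metric.mem_ball, dist_zero_right]
    have h1 : ∑ n ∈ t, |a n| ^ q < (ε / (C + 1)) ^ q := by
      have h0 := hs t ht
      rw [Metric.mem_ball, dist_zero_right, Real.norm_eq_abs] at h0
      exact lt_of_le_of_lt (le_abs_self _) h0
    have h2 : (∑ n ∈ t, |a n| ^ q) ^ (1 / q) < ε / (C + 1) := by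
      have h3 := Real.rpow_lt_rpow (by positivity) h1 (one_div_pos.2 hq0)
      rwa [← Real.rpow_mul (le_of_lt (div_pos εpos (by linarith))),
        mul_one_div_cancel hq0.ne', Real.rpow_one] at h3
    calc ‖∑ n ∈ t, a n • x n‖ ≤ C * (∑ n ∈ t, |a n| ^ q) ^ (1 / q) := key t
      _ ≤ (C + 1) * (∑ n ∈ t, |a n| ^ q) ^ (1 / q) :=
          mul_le_mul_of_nonneg_right (by linarith)
            (Real.rpow_nonneg (Finset.sum_nonneg fun n _ =>
              Real.rpow_nonneg (abs_nonneg _) _) _)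
      _ < (C + 1) * (ε / (C + 1)) := mul_lt_mul_of_pos_left h2 (by linarith)
      _ = ε := by field_simp
  · -- backward direction
    intro h f
    set b : ℕ → ℝ := fun n => f (x n) with hb
    have hsum : ∀ a : lp (fun _ : ℕ => ℝ) (ENNReal.ofReal q),
        Summable fun n => b n * a n := by
      intro a
      have h2 := (h a).map f f.continuous
      have h3 : (⇑f ∘ fun n => a n • x n) = fun n => b n * a n := by
        funext n
        simp [Function.comp, map_smul, smul_eq_mul, hb, mul_comm]
      rwa [h3] at h2
    let coord : ℕ → (lp (fun _ : ℕ => ℝ) (ENNReal.ofReal q) →L[ℝ] ℝ) := fun n =>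
      LinearMap.mkContinuous
        { toFun := fun a => a n
          map_add' := fun a b => rfl
          map_smul' := fun c a => rfl } 1
        (fun a => by rw [one_mul]; exact lp.norm_apply_le_norm (by positivity) a n)
    let T : ℕ → (lp (fun _ : ℕ => ℝ) (ENNReal.ofReal q) →L[ℝ] ℝ) := fun N =>
      ∑ n ∈ Finset.range N, b n • coord n
    have hT : ∀ N a, T N a = ∑ n ∈ Finset.range N, b n * a n := by
      intro N a
      simp [T, coord, ContinuousLinearMap.sum_apply, smul_eq_mul,
        LinearMap.mkContinuous_apply, LinearMap.coe_mk, AddHom.coe_mk]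
      rfl
    obtain ⟨C, hC⟩ : ∃ C, ∀ N, ‖T N‖ ≤ C := by
      apply banach_steinhaus
      intro a
      have hcv : Tendsto (fun N => ∑ n ∈ Finset.range N, b n * a n) atTop
          (𝓝 (∑' n, b n * a n)) := (hsum a).hasSum.tendsto_sum_nat
      obtain ⟨M, hM⟩ := hcv.norm.bddAbove_range
      exact ⟨M, fun N => by rw [hT]; exact hM (Set.mem_range_self N)⟩
    have hC0 : 0 ≤ C := le_trans (norm_nonneg (T 0)) (hC 0)
    have hCp : ∀ N, ∑ n ∈ Finset.range N, |b n| ^ p ≤ C ^ p := by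
      intro N
      set S := ∑ n ∈ Finset.range N, |b n| ^ p with hSdef
      have hS0 : 0 ≤ S := by positivity
      set c : ℕ → ℝ := fun n =>
        if n ∈ Finset.range N then |b n| ^ (p - 1) * (if 0 ≤ b n then (1 : ℝ) else -1)
        else 0 with hc
      have hcmem : Memℓp c (ENNReal.ofReal q) := by
        refine Memℓp.of_exponent_ge (memℓp_zero ?_) (by positivity)
        refine (Finset.range N).finite_toSet.subset fun n hn => ?_
        simp only [Set.mem_setOf_eq, hc] at hn
        by_contra hn'
        rw [if_neg (by simpa using hn')] at hn
        exact hn rfl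
      set A : lp (fun _ : ℕ => ℝ) (ENNReal.ofReal q) := ⟨c, hcmem⟩ with hA
      have hAapp : ∀ n, A n = c n := fun n => rfl
      have hTA : T N A = S := by
        rw [hT, hSdef]
        refine Finset.sum_congr rfl fun n hn => ?_
        rw [hAapp, hc]
        simp only [if_pos hn]
        rw [mul_comm]
        exact (sign_rpow_aux hp1 (b n)).1
      have hnormA : ‖A‖ = S ^ (1 / q) := by
        rw [lp.norm_eq_tsum_rpow (by rw [hQto]; exact hq0) A, hQto]
        congr 1
        rw [tsum_eq_sum (s := Finset.range N)
          (fun n hn => by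
            rw [Real.norm_eq_abs, hAapp]
            simp only [hc, if_neg hn, abs_zero]
            exact Real.zero_rpow hq0.ne')]
        rw [hSdef]
        refine Finset.sum_congr rfl fun n hn => ?_
        rw [Real.norm_eq_abs, hAapp, hc]
        simp only [if_pos hn]
        rw [(sign_rpow_aux hp1 (b n)).2, ← Real.rpow_mul (abs_nonneg _),
          hpq.sub_one_mul_conj]
      have hineq : S ≤ C * S ^ (1 / q) := by
        calc S = T N A := hTA.symm
          _ ≤ |T N A| := le_abs_self _
          _ = ‖T N A‖ := (Real.norm_eq_abs _).symm
          _ ≤ ‖T N‖ * ‖A‖ := (T N).le_opNorm A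
          _ ≤ C * S ^ (1 / q) := by
              rw [hnormA]
              exact mul_le_mul_of_nonneg_right (hC N) (Real.rpow_nonneg hS0 _)
      rcases eq_or_lt_of_le hS0 with h0 | hSpos
      · rw [← h0]; exact Real.rpow_nonneg hC0 p
      · have h1 : S ^ (1 / p) * S ^ (1 / q) ≤ C * S ^ (1 / q) := by
          rw [← Real.rpow_add hSpos]
          have : 1 / p + 1 / q = 1 := by
            rw [one_div, one_div]; exact hpq.inv_add_inv_eq_one
          rw [this, Real.rpow_one]
          exact hineq
        have h2 : S ^ (1 / p) ≤ C :=
          le_of_mul_le_mul_right h1 (Real.rpow_pos_of_pos hSpos _)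
        calc S = (S ^ (1 / p)) ^ p := by
              rw [← Real.rpow_mul hS0, one_div_mul_cancel hp0.ne', Real.rpow_one]
          _ ≤ C ^ p := Real.rpow_le_rpow (Real.rpow_nonneg hS0 _) h2 hp0.le
    apply memℓp_gen' (C := C ^ p)
    intro s
    obtain ⟨N, hN⟩ := s.exists_nat_subset_range
    calc ∑ i ∈ s, ‖b i‖ ^ (ENNReal.ofReal p).toReal
        = ∑ i ∈ s, |b i| ^ p := by
          rw [hPto]; exact Finset.sum_congr rfl fun i _ => by rw [Real.norm_eq_abs]
      _ ≤ ∑ i ∈ Finset.range N, |b i| ^ p :=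
          Finset.sum_le_sum_of_subset_of_nonneg hN (fun i _ _ => by positivity)
      _ ≤ C ^ p := hCp N
end

section
/- Let 1 < p < ∞. If (x_n) is a weakly p-summable sequence in a Banach space X and (φ_n) is a bounded sequence in C(K) for a compact Hausdorff space K, then the sequence (φ_n x_n) is weakly p-summable in C(K, X). -/
/-!
Weak `p`-summability of `(zₙ)` is equivalent to boundedness of `a ↦ ∑ aₙ zₙ` on finitely
supported sequences in `ℓ_q`, `1/p + 1/q = 1`: one direction is the closed graph theorem for
`z* ↦ (z* zₙ)ₙ : Z* → ℓ_p` followed by Hölder, the other is the duality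
`‖b‖_p = sup_{‖a‖_q ≤ 1} ∑ aₙ bₙ`. For `zₙ = φₙ xₙ` in `C(K, X)`, evaluation at `t ∈ K` gives
`∑ (aₙ φₙ(t)) xₙ`, and the coefficients `aₙ φₙ(t)` have `ℓ_q` norm at most `M ‖a‖_q`.
-/

open Filter Topology

open Finset

section Holder

variable {ι : Type*} {p q : ℝ}

theorem abs_inner_le_Lp_mul_Lq (hpq : p.HolderConjugate q) (s : Finset ι) (f g : ι → ℝ) :
    |∑ i ∈ s, f i * g i| ≤ (∑ i ∈ s, |f i| ^ p) ^ (1 / p) * (∑ i ∈ s, |g i| ^ q) ^ (1 / q) :=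
  (abs_sum_le_sum_abs _ _).trans <| by
    simpa only [abs_mul, abs_abs] using Real.inner_le_Lp_mul_Lq s (|f ·|) (|g ·|) hpq

theorem Lp_le_of_forall_inner_le_mul_Lq (hpq : p.HolderConjugate q) (s : Finset ι)
    (g : ι → ℝ) {D : ℝ} (hD : 0 ≤ D)
    (h : ∀ f : ι → ℝ, ∑ i ∈ s, f i * g i ≤ D * (∑ i ∈ s, |f i| ^ q) ^ (1 / q)) :
    (∑ i ∈ s, |g i| ^ p) ^ (1 / p) ≤ D := by
  set A := ∑ i ∈ s, |g i| ^ p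
  have hA : 0 ≤ A := by positivity
  rcases hA.eq_or_lt with hA0 | hA0
  · rw [← hA0, Real.zero_rpow hpq.one_div_ne_zero]; exact hD
  -- the extremal `f` is `g |g| ^ (p - 2)`, for which both sides of `h` are powers of `A`
  set f : ι → ℝ := fun i => g i * |g i| ^ (p - 2)
  have hfg : ∀ i, f i * g i = |g i| ^ p := by
    intro i
    rcases eq_or_ne (g i) 0 with hg | hg
    · simp [f, hg, Real.zero_rpow hpq.ne_zero]
    · calc f i * g i = |g i| ^ (p - 2) * |g i| ^ (2 : ℝ) := by
            rw [Real.rpow_two, sq_abs]; ring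
        _ = |g i| ^ p := by rw [← Real.rpow_add (abs_pos.2 hg)]; ring_nf
  have hf : ∀ i, |f i| ^ q = |g i| ^ p := by
    intro i
    have habs : |f i| = |g i| ^ (p - 1) := by
      rcases eq_or_ne (g i) 0 with hg | hg
      · simp [f, hg, Real.zero_rpow hpq.sub_one_ne_zero]
      · rw [abs_mul, abs_of_nonneg (by positivity : 0 ≤ |g i| ^ (p - 2))]
        nth_rewrite 1 [← Real.rpow_one |g i|]
        rw [← Real.rpow_add (abs_pos.2 hg)]
        ring_nf
    rw [habs, ← Real.rpow_mul (abs_nonneg _), hpq.sub_one_mul_conj]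
  have key : A ≤ D * A ^ (1 / q) := by
    simpa only [hfg, hf] using h f
  refine le_of_mul_le_mul_right ?_ (Real.rpow_pos_of_pos hA0 (1 / q))
  calc A ^ (1 / p) * A ^ (1 / q) = A := by
        rw [← Real.rpow_add hA0, hpq.one_div_add_one_div, div_one, Real.rpow_one]
    _ ≤ D * A ^ (1 / q) := key

theorem Lp_mul_le_mul_Lp_of_abs_le (hq : 0 < q) (s : Finset ι) (f c : ι → ℝ) {M : ℝ}
    (hM : 0 ≤ M) (hc : ∀ i ∈ s, |c i| ≤ M) :
    (∑ i ∈ s, |f i * c i| ^ q) ^ (1 / q) ≤ M * (∑ i ∈ s, |f i| ^ q) ^ (1 / q) := by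
  have : ∑ i ∈ s, |f i * c i| ^ q ≤ M ^ q * ∑ i ∈ s, |f i| ^ q := by
    rw [mul_sum]
    refine sum_le_sum fun i hi => ?_
    rw [abs_mul, mul_comm, Real.mul_rpow (abs_nonneg _) (abs_nonneg _)]
    gcongr
    exact hc i hi
  calc (∑ i ∈ s, |f i * c i| ^ q) ^ (1 / q) ≤ (M ^ q * ∑ i ∈ s, |f i| ^ q) ^ (1 / q) := by gcongr
    _ = M * (∑ i ∈ s, |f i| ^ q) ^ (1 / q) := by
      rw [Real.mul_rpow (by positivity) (by positivity), ← Real.rpow_mul hM,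
        mul_one_div_cancel hq.ne', Real.rpow_one]

end Holder

section

variable {Z : Type*} [NormedAddCommGroup Z] [NormedSpace ℝ Z]

namespace WeaklyPSummable

variable {x : ℕ → Z}

noncomputable def toLp {p : ENNReal} [Fact (1 ≤ p)] (hx : WeaklyPSummable p x) :
    (Z →L[ℝ] ℝ) →L[ℝ] lp (fun _ : ℕ => ℝ) p :=
  let T : (Z →L[ℝ] ℝ) →ₗ[ℝ] lp (fun _ : ℕ => ℝ) p :=
    { toFun := fun f => ⟨fun n => f (x n), hx f⟩
      map_add' := fun _ _ => rfl
      map_smul' := fun _ _ => rfl }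
  { toLinearMap := T
    cont := T.continuous_of_seq_closed_graph fun u f y hu hTu => by
      ext n
      refine tendsto_nhds_unique
        (((lp.lipschitzWith_one_eval p n).continuous.tendsto y).comp hTu) ?_
      exact ((ContinuousLinearMap.apply ℝ ℝ (x n)).continuous.tendsto f).comp hu }

theorem exists_Lp_le {p : ℝ} (hp : 1 ≤ p) (hx : WeaklyPSummable (ENNReal.ofReal p) x) :
    ∃ C, 0 ≤ C ∧ ∀ (f : Z →L[ℝ] ℝ) (s : Finset ℕ),
      (∑ n ∈ s, |f (x n)| ^ p) ^ (1 / p) ≤ C * ‖f‖ := by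
  have : Fact (1 ≤ ENNReal.ofReal p) := ⟨by simpa using ENNReal.ofReal_le_ofReal hp⟩
  have hp' : (ENNReal.ofReal p).toReal = p := ENNReal.toReal_ofReal (by linarith)
  refine ⟨‖hx.toLp‖, hx.toLp.opNorm_nonneg, fun f s => ?_⟩
  calc (∑ n ∈ s, |f (x n)| ^ p) ^ (1 / p) ≤ ‖hx.toLp f‖ := by
        have h := lp.sum_rpow_le_norm_rpow (hp'.symm ▸ by linarith) (hx.toLp f) s
        rw [hp'] at h
        rw [one_div, Real.rpow_inv_le_iff_of_pos (by positivity) (norm_nonneg _) (by linarith)]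
        exact h
    _ ≤ ‖hx.toLp‖ * ‖f‖ := hx.toLp.le_opNorm f

end WeaklyPSummable

theorem weaklyPSummable_iff_exists_norm_sum_smul_le {p q : ℝ} (hpq : p.HolderConjugate q)
    {z : ℕ → Z} :
    WeaklyPSummable (ENNReal.ofReal p) z ↔ ∃ C, 0 ≤ C ∧ ∀ (s : Finset ℕ) (a : ℕ → ℝ),
      ‖∑ n ∈ s, a n • z n‖ ≤ C * (∑ n ∈ s, |a n| ^ q) ^ (1 / q) := by
  have hpair : ∀ (f : Z →L[ℝ] ℝ) (s : Finset ℕ) (a : ℕ → ℝ),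
      f (∑ n ∈ s, a n • z n) = ∑ n ∈ s, a n * f (z n) := by
    intro f s a
    simp only [map_sum, map_smul, smul_eq_mul]
  constructor
  · intro hz
    obtain ⟨C, hC, hCz⟩ := hz.exists_Lp_le hpq.lt.le
    refine ⟨C, hC, fun s a => NormedSpace.norm_le_dual_bound ℝ _ (by positivity) fun f => ?_⟩
    rw [hpair, Real.norm_eq_abs]
    calc |∑ n ∈ s, a n * f (z n)|
        ≤ (∑ n ∈ s, |a n| ^ q) ^ (1 / q) * (∑ n ∈ s, |f (z n)| ^ p) ^ (1 / p) :=
          abs_inner_le_Lp_mul_Lq hpq.symm s _ _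
      _ ≤ (∑ n ∈ s, |a n| ^ q) ^ (1 / q) * (C * ‖f‖) := by gcongr; exact hCz f s
      _ = C * (∑ n ∈ s, |a n| ^ q) ^ (1 / q) * ‖f‖ := by ring
  · rintro ⟨C, hC, hCz⟩ f
    have hp' : (ENNReal.ofReal p).toReal = p := ENNReal.toReal_ofReal hpq.nonneg
    refine memℓp_gen' (C := (‖f‖ * C) ^ p) fun s => ?_
    have h := Lp_le_of_forall_inner_le_mul_Lq hpq s (fun n => f (z n)) (by positivity) fun a =>
      calc ∑ n ∈ s, a n * f (z n) = f (∑ n ∈ s, a n • z n) := (hpair f s a).symm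
        _ ≤ ‖f‖ * ‖∑ n ∈ s, a n • z n‖ := (le_abs_self _).trans (f.le_opNorm _)
        _ ≤ ‖f‖ * (C * (∑ n ∈ s, |a n| ^ q) ^ (1 / q)) := by gcongr; exact hCz s a
        _ = ‖f‖ * C * (∑ n ∈ s, |a n| ^ q) ^ (1 / q) := by ring
    rw [one_div, Real.rpow_inv_le_iff_of_pos (by positivity) (by positivity) hpq.pos] at h
    rwa [hp']

end

theorem stmt3_general {K X : Type*} [TopologicalSpace K] [CompactSpace K]
    [NormedAddCommGroup X] [NormedSpace ℝ X]
    (p : ℝ) (hp : 1 < p)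
    (x : ℕ → X) (hx : WeaklyPSummable (ENNReal.ofReal p) x)
    (φ : ℕ → C(K, ℝ)) (M : ℝ) (hφ : ∀ n, ‖φ n‖ ≤ M) :
    WeaklyPSummable (ENNReal.ofReal p)
      (fun n => ContinuousMap.mk (fun t => φ n t • x n)
        ((map_continuous (φ n)).smul continuous_const)) := by
  have hpq := Real.HolderConjugate.conjExponent hp
  set q := p.conjExponent
  obtain ⟨C, hC, hCx⟩ := (weaklyPSummable_iff_exists_norm_sum_smul_le hpq).1 hx
  have hM : 0 ≤ M := (norm_nonneg _).trans (hφ 0)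
  refine (weaklyPSummable_iff_exists_norm_sum_smul_le hpq).2 ⟨C * M, by positivity, fun s a => ?_⟩
  refine (ContinuousMap.norm_le _ (by positivity)).2 fun t => ?_
  calc ‖(∑ n ∈ s, a n • ContinuousMap.mk (fun t => φ n t • x n)
          ((map_continuous (φ n)).smul continuous_const)) t‖
      = ‖∑ n ∈ s, (a n * φ n t) • x n‖ := by simp [smul_smul]
    _ ≤ C * (∑ n ∈ s, |a n * φ n t| ^ q) ^ (1 / q) := hCx s _
    _ ≤ C * (M * (∑ n ∈ s, |a n| ^ q) ^ (1 / q)) := by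
        gcongr
        exact Lp_mul_le_mul_Lp_of_abs_le hpq.symm.pos s a _ hM fun n _ =>
          ((φ n).norm_coe_le_norm t).trans (hφ n)
    _ = C * M * (∑ n ∈ s, |a n| ^ q) ^ (1 / q) := by ring

theorem stmt3 {K X : Type*} [TopologicalSpace K] [CompactSpace K] [T2Space K]
    [NormedAddCommGroup X] [NormedSpace ℝ X] [CompleteSpace X]
    (p : ℝ) (hp : 1 < p)
    (x : ℕ → X) (hx : WeaklyPSummable (ENNReal.ofReal p) x)
    (φ : ℕ → C(K, ℝ)) (M : ℝ) (hφ : ∀ n, ‖φ n‖ ≤ M) :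
    WeaklyPSummable (ENNReal.ofReal p)
      (fun n => ContinuousMap.mk (fun t => φ n t • x n)
        ((map_continuous (φ n)).smul continuous_const)) :=
  stmt3_general p hp x hx φ M hφ
end

section
/- If ∑ x_n is a weakly unconditionally convergent series in a Banach space X (i.e., ∑|x*(x_n)| < ∞ for all x* ∈ X*) and (φ_n) is a bounded sequence in C(K), then ∑ φ_n x_n is weakly unconditionally convergent in C(K, X). -/
open Filter Topology

/-- A series `∑ xₙ` is weakly unconditionally convergent. -/
def WUC {Z : Type*} [NormedAddCommGroup Z] [NormedSpace ℝ Z] (x : ℕ → Z) : Prop :=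
  ∀ f : Z →L[ℝ] ℝ, Summable (fun n => |f (x n)|)

/-- Uniform bound from wuc, via Banach–Steinhaus in the bidual. -/
lemma wuc_bound {X : Type*} [NormedAddCommGroup X] [NormedSpace ℝ X] [CompleteSpace X]
    (x : ℕ → X) (hx : WUC x) :
    ∃ C : ℝ, 0 ≤ C ∧ ∀ (s : Finset ℕ) (ε : ℕ → ℝ), (∀ i, |ε i| ≤ 1) →
      ‖∑ i ∈ s, ε i • x i‖ ≤ C := by
  classical
  set ι := Finset ℕ × {ε : ℕ → ℝ // ∀ i, |ε i| ≤ 1}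
  set y : ι → X := fun p => ∑ i ∈ p.1, (p.2 : ℕ → ℝ) i • x i with hy
  set g : ι → StrongDual ℝ X →L[ℝ] ℝ :=
    fun p => NormedSpace.inclusionInDoubleDual ℝ X (y p) with hg
  have hpt : ∀ f : StrongDual ℝ X, ∃ C, ∀ p : ι, ‖g p f‖ ≤ C := by
    intro f
    refine ⟨∑' n, |f (x n)|, fun p => ?_⟩
    have h1 : ‖g p f‖ = |f (y p)| := by
      rw [hg]; simp [NormedSpace.dual_def, Real.norm_eq_abs]
    rw [h1, hy]
    calc |f (∑ i ∈ p.1, (p.2 : ℕ → ℝ) i • x i)|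
        = |∑ i ∈ p.1, (p.2 : ℕ → ℝ) i * f (x i)| := by
          rw [map_sum]; simp [smul_eq_mul]
      _ ≤ ∑ i ∈ p.1, |(p.2 : ℕ → ℝ) i * f (x i)| := Finset.abs_sum_le_sum_abs _ _
      _ ≤ ∑ i ∈ p.1, |f (x i)| := by
          refine Finset.sum_le_sum fun i _ => ?_
          rw [abs_mul]
          exact mul_le_of_le_one_left (abs_nonneg _) (p.2.2 i)
      _ ≤ ∑' n, |f (x n)| := Summable.sum_le_tsum _ (fun i _ => abs_nonneg _) (hx f)
  obtain ⟨C', hC'⟩ := banach_steinhaus hpt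
  refine ⟨max C' 0, le_max_right _ _, fun s ε hε => ?_⟩
  have hyp : ‖(⟨s, ⟨ε, hε⟩⟩ : ι) |> y‖ ≤ max C' 0 := by
    apply NormedSpace.norm_le_dual_bound ℝ _ (le_max_right _ _)
    intro f
    have := (g ⟨s, ⟨ε, hε⟩⟩).le_opNorm f
    have h1 : ‖g ⟨s, ⟨ε, hε⟩⟩ f‖ = ‖f (y ⟨s, ⟨ε, hε⟩⟩)‖ := by
      rw [hg]; simp [NormedSpace.dual_def]
    rw [h1] at this
    exact this.trans (mul_le_mul_of_nonneg_right ((hC' _).trans (le_max_left _ _)) (norm_nonneg f))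
  simpa [hy] using hyp

theorem stmt4 {K X : Type*} [TopologicalSpace K] [CompactSpace K] [T2Space K]
    [NormedAddCommGroup X] [NormedSpace ℝ X] [CompleteSpace X]
    (x : ℕ → X) (hx : WUC x)
    (φ : ℕ → C(K, ℝ)) (M : ℝ) (hφ : ∀ n, ‖φ n‖ ≤ M) :
    WUC (fun n => ContinuousMap.mk (fun t => φ n t • x n)
      ((map_continuous (φ n)).smul continuous_const)) := by
  classical
  obtain ⟨C, hC0, hC⟩ := wuc_bound x hx
  set z : ℕ → C(K, X) := fun n => ContinuousMap.mk (fun t => φ n t • x n)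
      ((map_continuous (φ n)).smul continuous_const) with hz
  intro f
  set M₁ : ℝ := max M 1 with hM₁
  have hM₁pos : 0 < M₁ := lt_of_lt_of_le one_pos (le_max_right _ _)
  have hφM₁ : ∀ n (t : K), |φ n t| ≤ M₁ := by
    intro n t
    calc |φ n t| = ‖φ n t‖ := rfl
      _ ≤ ‖φ n‖ := (φ n).norm_coe_le_norm t
      _ ≤ M₁ := (hφ n).trans (le_max_left _ _)
  refine summable_of_sum_le (c := ‖f‖ * (M₁ * C)) (fun n => abs_nonneg _) (fun s => ?_)
  set ε : ℕ → ℝ := fun i => if 0 ≤ f (z i) then 1 else -1 with hε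
  have hεabs : ∀ i, ε i * f (z i) = |f (z i)| := by
    intro i
    by_cases h : 0 ≤ f (z i)
    · simp [hε, h, abs_of_nonneg h]
    · simp only [hε, if_neg h, neg_one_mul]
      rw [abs_of_neg (lt_of_not_ge h)]
  -- norm of the partial sum in C(K, X)
  have hnorm : ‖∑ i ∈ s, ε i • z i‖ ≤ M₁ * C := by
    rw [ContinuousMap.norm_le _ (by positivity)]
    intro t
    have hev : (∑ i ∈ s, ε i • z i) t = ∑ i ∈ s, (ε i * φ i t) • x i := by
      simp [hz, mul_smul]
    rw [hev]
    have hcoef : ∀ i, |(fun i => ε i * φ i t / M₁) i| ≤ 1 := by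
      intro i
      rw [abs_div, abs_of_pos hM₁pos, div_le_one hM₁pos, abs_mul]
      calc |ε i| * |φ i t| ≤ 1 * M₁ := by
            apply mul_le_mul _ (hφM₁ i t) (abs_nonneg _) zero_le_one
            by_cases h : 0 ≤ f (z i) <;> simp [hε, h]
        _ = M₁ := one_mul _
    have := hC s (fun i => ε i * φ i t / M₁) hcoef
    have heq : ∑ i ∈ s, (ε i * φ i t) • x i
        = M₁ • ∑ i ∈ s, (ε i * φ i t / M₁) • x i := by
      rw [Finset.smul_sum]
      refine Finset.sum_congr rfl fun i _ => ?_
      rw [smul_smul, mul_div_cancel₀ _ hM₁pos.ne']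
    rw [heq, norm_smul, Real.norm_eq_abs, abs_of_pos hM₁pos]
    exact mul_le_mul_of_nonneg_left this hM₁pos.le
  calc ∑ i ∈ s, |f (z i)| = ∑ i ∈ s, ε i * f (z i) := by
        exact Finset.sum_congr rfl fun i _ => (hεabs i).symm
    _ = f (∑ i ∈ s, ε i • z i) := by rw [map_sum]; simp [smul_eq_mul]
    _ ≤ |f (∑ i ∈ s, ε i • z i)| := le_abs_self _
    _ ≤ ‖f‖ * ‖∑ i ∈ s, ε i • z i‖ := f.le_opNorm _
    _ ≤ ‖f‖ * (M₁ * C) := mul_le_mul_of_nonneg_left hnorm (norm_nonneg f)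
end

section
/- If (x_n) is a weakly null sequence in a Banach space X and (φ_n) is a bounded sequence in C(K), then (φ_n x_n) is weakly null in C(K, X). -/
open Filter Topology

/-!
Embed `C(K, X)` isometrically into `C(K × B, ℝ)`, where `B` is the weak*-compact dual unit ball,
by `g ↦ ((t, ψ) ↦ ψ (g t))`. A functional `f` on `C(K, X)` extends, by Hahn–Banach against the
sublinear functional `u ↦ ‖f‖ * sup u`, to a positive functional on `C(K × B, ℝ)`, which by
Riesz–Markov–Kakutani is integration against a finite measure. The images of `φ n • x n` are
uniformly bounded (uniform boundedness principle) and tend to `0` pointwise, so dominated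
convergence gives `f (φ n • x n) → 0`.
-/

open MeasureTheory CompactlySupported

theorem PositiveLinearMap.tendsto_zero_of_abs_le_of_tendsto_zero {Ω : Type*} [TopologicalSpace Ω]
    [CompactSpace Ω] [T2Space Ω] (F : C(Ω, ℝ) →ₚ[ℝ] ℝ) {u : ℕ → C(Ω, ℝ)} {C : ℝ}
    (hC : ∀ n ω, |u n ω| ≤ C) (hu : ∀ ω, Tendsto (fun n => u n ω) atTop (𝓝 0)) :
    Tendsto (fun n => F (u n)) atTop (𝓝 0) := by
  borelize Ω
  let Λ : C_c(Ω, ℝ) →ₚ[ℝ] ℝ := PositiveLinearMap.mk₀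
    { toFun := fun f => F f.toContinuousMap
      map_add' := fun f g => map_add F _ _
      map_smul' := fun c f => map_smul F c _ }
    (fun f hf => F.map_nonneg hf)
  have hF : ∀ v : C(Ω, ℝ), F v = ∫ ω, v ω ∂(RealRMK.rieszMeasure Λ) := fun v =>
    (RealRMK.integral_rieszMeasure Λ (CompactlySupportedContinuousMap.continuousMapEquiv v)).symm
  simp only [hF]
  simpa using tendsto_integral_of_dominated_convergence (fun _ => C)
    (fun n => (u n).continuous.aestronglyMeasurable) (integrable_const C)
    (fun n => ae_of_all _ (hC n)) (ae_of_all _ hu)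

theorem exists_positiveLinearMap_apply_eq_of_norm_le_iSup {V Ω : Type*} [NormedAddCommGroup V]
    [NormedSpace ℝ V] [TopologicalSpace Ω] [CompactSpace Ω] (J : V →ₗ[ℝ] C(Ω, ℝ))
    (hJ : ∀ v, ‖v‖ ≤ ⨆ ω, J v ω) (f : StrongDual ℝ V) :
    ∃ F : C(Ω, ℝ) →ₚ[ℝ] ℝ, ∀ v, F (J v) = f v := by
  have hJinj : Function.Injective J := by
    refine (injective_iff_map_eq_zero J).2 fun v hv => norm_le_zero_iff.1 ?_
    simpa [hv] using hJ v
  let N : C(Ω, ℝ) → ℝ := fun u => ‖f‖ * ⨆ ω, u ω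
  have hN_smul : ∀ c : ℝ, 0 < c → ∀ u, N (c • u) = c * N u := by
    intro c hc u
    simp only [N, ContinuousMap.smul_apply, smul_eq_mul, ← Real.mul_iSup_of_nonneg hc.le]
    ring
  have hN_add : ∀ u v, N (u + v) ≤ N u + N v := by
    intro u v
    rw [← mul_add]
    refine mul_le_mul_of_nonneg_left ?_ (norm_nonneg f)
    rcases isEmpty_or_nonempty Ω with _ | _
    · simp
    exact ciSup_le fun ω => add_le_add
      (le_ciSup (isCompact_range u.continuous).bddAbove ω)
      (le_ciSup (isCompact_range v.continuous).bddAbove ω)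
  let e := LinearEquiv.ofInjective J hJinj
  let f₀ : C(Ω, ℝ) →ₗ.[ℝ] ℝ := ⟨LinearMap.range J, (f : V →ₗ[ℝ] ℝ) ∘ₗ e.symm.toLinearMap⟩
  have hf₀ : ∀ u : f₀.domain, f₀ u ≤ N u := by
    rintro ⟨_, v, rfl⟩
    have hv : e.symm ⟨J v, v, rfl⟩ = v := e.symm_apply_apply v
    calc f₀ ⟨J v, v, rfl⟩ = f v := congrArg f hv
      _ ≤ ‖f‖ * ‖v‖ := (le_abs_self _).trans (f.le_opNorm v)
      _ ≤ N (J v) := mul_le_mul_of_nonneg_left (hJ v) (norm_nonneg f)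
  obtain ⟨F, hFf₀, hFN⟩ := exists_extension_of_le_sublinear f₀ N hN_smul hN_add hf₀
  have hF_nonneg : ∀ u, 0 ≤ u → 0 ≤ F u := by
    intro u hu
    have : N (-u) ≤ 0 := mul_nonpos_of_nonneg_of_nonpos (norm_nonneg f)
      (Real.iSup_nonpos fun ω => neg_nonpos.2 (hu ω))
    linarith [hFN (-u), map_neg F u]
  refine ⟨PositiveLinearMap.mk₀ F hF_nonneg, fun v => ?_⟩
  exact (hFf₀ ⟨J v, v, rfl⟩).trans (congrArg f (e.symm_apply_apply v))

theorem WeaklyNull.exists_norm_le {Z : Type*} [NormedAddCommGroup Z] [NormedSpace ℝ Z]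
    {x : ℕ → Z} (hx : WeaklyNull x) : ∃ C, ∀ n, ‖x n‖ ≤ C := by
  let ι := NormedSpace.inclusionInDoubleDualLi ℝ (E := Z)
  obtain ⟨C, hC⟩ := banach_steinhaus (g := fun n => ι (x n)) fun f => by
    obtain ⟨C, hC⟩ := (hx f).norm.bddAbove_range
    exact ⟨C, fun n => hC ⟨n, rfl⟩⟩
  exact ⟨C, fun n => (ι.norm_map (x n)).symm.trans_le (hC n)⟩

namespace WeakDual

variable {X : Type*} [NormedAddCommGroup X] [NormedSpace ℝ X]

variable (X) in
abbrev closedUnitBall : Set (WeakDual ℝ X) := toStrongDual ⁻¹' Metric.closedBall 0 1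

instance : CompactSpace (closedUnitBall X) :=
  isCompact_iff_compactSpace.1 (isCompact_closedBall 0 1)

theorem abs_apply_le_norm (ψ : closedUnitBall X) (x : X) : |(ψ : WeakDual ℝ X) x| ≤ ‖x‖ := by
  simpa using (toStrongDual (ψ : WeakDual ℝ X)).le_of_opNorm_le (mem_closedBall_zero_iff.1 ψ.2) x

theorem continuous_eval_closedUnitBall :
    Continuous fun p : X × closedUnitBall X => (p.2 : WeakDual ℝ X) p.1 := by
  rw [continuous_iff_continuousAt]
  rintro ⟨x₀, ψ₀⟩
  have h₁ : Tendsto (fun p : X × closedUnitBall X => (p.2 : WeakDual ℝ X) (p.1 - x₀))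
      (𝓝 (x₀, ψ₀)) (𝓝 0) :=
    squeeze_zero_norm (fun p => abs_apply_le_norm p.2 _)
      ((continuous_fst.sub continuous_const).norm.tendsto' _ _ (by simp))
  have h₂ : Tendsto (fun p : X × closedUnitBall X => (p.2 : WeakDual ℝ X) x₀)
      (𝓝 (x₀, ψ₀)) (𝓝 ((ψ₀ : WeakDual ℝ X) x₀)) :=
    ((eval_continuous x₀).comp (continuous_subtype_val.comp continuous_snd)).tendsto _
  simpa [ContinuousAt] using h₁.add h₂

variable (K : Type*) [TopologicalSpace K]

noncomputable def evalClosedUnitBall : C(K, X) →ₗ[ℝ] C(K × closedUnitBall X, ℝ) where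
  toFun g := ⟨fun p => (p.2 : WeakDual ℝ X) (g p.1),
    continuous_eval_closedUnitBall.comp ((g.continuous.comp continuous_fst).prodMk continuous_snd)⟩
  map_add' g h := by ext; simp
  map_smul' c g := by ext; simp

variable {K}

@[simp]
theorem evalClosedUnitBall_apply (g : C(K, X)) (p : K × closedUnitBall X) :
    evalClosedUnitBall K g p = (p.2 : WeakDual ℝ X) (g p.1) := rfl

theorem norm_le_iSup_evalClosedUnitBall [CompactSpace K] (g : C(K, X)) :
    ‖g‖ ≤ ⨆ p, evalClosedUnitBall K g p := by
  rcases isEmpty_or_nonempty K with _ | _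
  · simp [Subsingleton.elim g 0]
  have hbdd := (isCompact_range (evalClosedUnitBall K g).continuous).bddAbove
  refine (g.norm_le_of_nonempty).2 fun t => ?_
  obtain ⟨ψ, hψ, hψt⟩ := exists_dual_vector'' ℝ (g t)
  exact le_ciSup_of_le hbdd (t, ⟨toStrongDual.symm ψ, by simpa using hψ⟩) (by simp [hψt])

end WeakDual

open WeakDual in
theorem stmt5_general {K X : Type*} [TopologicalSpace K] [CompactSpace K] [T2Space K]
    [NormedAddCommGroup X] [NormedSpace ℝ X]
    (x : ℕ → X) (hx : WeaklyNull x)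
    (φ : ℕ → C(K, ℝ)) (M : ℝ) (hφ : ∀ n, ‖φ n‖ ≤ M) :
    WeaklyNull (fun n => ContinuousMap.mk (fun t => φ n t • x n)
      ((map_continuous (φ n)).smul continuous_const)) := by
  intro f
  obtain ⟨F, hF⟩ := exists_positiveLinearMap_apply_eq_of_norm_le_iSup (evalClosedUnitBall K)
    norm_le_iSup_evalClosedUnitBall f
  obtain ⟨C, hC⟩ := hx.exists_norm_le
  have hM : 0 ≤ M := (norm_nonneg _).trans (hφ 0)
  have hφM : ∀ n t, |φ n t| ≤ M := fun n t => ((φ n).norm_coe_le_norm t).trans (hφ n)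
  simp only [← hF]
  refine F.tendsto_zero_of_abs_le_of_tendsto_zero (C := M * C) (fun n p => ?_) (fun p => ?_)
  all_goals simp only [evalClosedUnitBall_apply, ContinuousMap.coe_mk, map_smul, smul_eq_mul]
  · rw [abs_mul]
    exact mul_le_mul (hφM n p.1) ((abs_apply_le_norm p.2 _).trans (hC n)) (abs_nonneg _) hM
  · refine squeeze_zero_norm (fun n => ?_) (by simpa using (hx (toStrongDual p.2)).abs.const_mul M)
    rw [Real.norm_eq_abs, abs_mul]
    exact mul_le_mul_of_nonneg_right (hφM n p.1) (abs_nonneg _)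

theorem stmt5 {K X : Type*} [TopologicalSpace K] [CompactSpace K] [T2Space K]
    [NormedAddCommGroup X] [NormedSpace ℝ X] [CompleteSpace X]
    (x : ℕ → X) (hx : WeaklyNull x)
    (φ : ℕ → C(K, ℝ)) (M : ℝ) (hφ : ∀ n, ‖φ n‖ ≤ M) :
    WeaklyNull (fun n => ContinuousMap.mk (fun t => φ n t • x n)
      ((map_continuous (φ n)).smul continuous_const)) :=
  stmt5_general x hx φ M hφ
end

section
/- Let T_n : X → Y be a sequence of limited completely continuous operators and T : X → Y an operator with ‖T_n − T‖ → 0. Then T is limited completely continuous. -/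
open Filter Topology

/-- An operator is limited completely continuous. -/
def Lcc {X Y : Type*} [NormedAddCommGroup X] [NormedSpace ℝ X]
    [NormedAddCommGroup Y] [NormedSpace ℝ Y] (T : X →L[ℝ] Y) : Prop :=
  ∀ x : ℕ → X, IsLimitedSet (Set.range x) → WeaklyNull x →
    Tendsto (fun n => ‖T (x n)‖) atTop (𝓝 (0 : ℝ))

open Bornology

/-! A weakly null sequence is bounded by the uniform boundedness principle, so operator-norm
convergence `T n → S` gives uniform convergence of `T n (x k)` to `S (x k)` in `k`; hence for a
fixed bounded sequence `x` the operators sending it to a null sequence form a closed set, and so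
do the limited completely continuous operators, being an intersection of such sets. -/

section WeaklyBounded

variable {𝕜 E : Type*} [RCLike 𝕜] [NormedAddCommGroup E] [NormedSpace 𝕜 E]

/-- Banach–Steinhaus for the image in the bidual, which acts on the dual: that is complete
whether or not `E` is. -/
theorem isBounded_range_of_forall_exists_norm_apply_le {ι : Type*} {x : ι → E}
    (hx : ∀ f : StrongDual 𝕜 E, ∃ C, ∀ i, ‖f (x i)‖ ≤ C) : IsBounded (Set.range x) := by
  obtain ⟨C, hC⟩ := banach_steinhaus (g := fun i => NormedSpace.inclusionInDoubleDualLi 𝕜 (x i)) hx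
  refine isBounded_iff_forall_norm_le.2 ⟨C, ?_⟩
  rintro _ ⟨i, rfl⟩
  simpa only [LinearIsometry.norm_map] using hC i

end WeaklyBounded

theorem WeaklyNull.isBounded_range {Z : Type*} [NormedAddCommGroup Z] [NormedSpace ℝ Z]
    {x : ℕ → Z} (hx : WeaklyNull x) : IsBounded (Set.range x) :=
  isBounded_range_of_forall_exists_norm_apply_le fun f =>
    let ⟨C, hC⟩ := (hx f).norm.bddAbove_range
    ⟨C, fun n => hC ⟨n, rfl⟩⟩

namespace ContinuousLinearMap

variable {𝕜 E F : Type*} [NontriviallyNormedField 𝕜] [NormedAddCommGroup E] [NormedSpace 𝕜 E]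
  [NormedAddCommGroup F] [NormedSpace 𝕜 F]

theorem tendstoUniformly_apply_of_tendsto {α ι : Type*} {p : Filter α} {T : α → E →L[𝕜] F}
    {S : E →L[𝕜] F} (hT : Tendsto T p (𝓝 S)) {x : ι → E} (hx : IsBounded (Set.range x)) :
    TendstoUniformly (fun n i => T n (x i)) (fun i => S (x i)) p := by
  obtain ⟨C, hC⟩ := isBounded_iff_forall_norm_le.1 hx
  have hsmall : Tendsto (fun n => ‖T n - S‖ * C) p (𝓝 0) := by
    simpa using ((tendsto_iff_norm_sub_tendsto_zero.1 hT).mul_const C)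
  refine Metric.tendstoUniformly_iff.2 fun ε hε => ?_
  filter_upwards [hsmall.eventually (gt_mem_nhds hε)] with n hn i
  calc dist (S (x i)) (T n (x i)) = ‖(T n - S) (x i)‖ := by rw [dist_comm, dist_eq_norm, sub_apply]
    _ ≤ ‖T n - S‖ * ‖x i‖ := le_opNorm _ _
    _ ≤ ‖T n - S‖ * C := by gcongr; exact hC _ ⟨i, rfl⟩
    _ < ε := hn

theorem isClosed_setOf_tendsto_apply_zero {ι : Type*} {l : Filter ι} {x : ι → E}
    (hx : IsBounded (Set.range x)) :
    IsClosed {T : E →L[𝕜] F | Tendsto (fun i => T (x i)) l (𝓝 0)} := by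
  refine isClosed_iff_clusterPt.2 fun S (hS : NeBot _) => ?_
  exact (tendstoUniformly_apply_of_tendsto (tendsto_inf_left (f := fun T => T) tendsto_id) hx)
    |>.tendsto_of_eventually_tendsto (mem_inf_of_right (mem_principal_self _)) tendsto_const_nhds

end ContinuousLinearMap

theorem isClosed_setOf_lcc {X Y : Type*} [NormedAddCommGroup X] [NormedSpace ℝ X]
    [NormedAddCommGroup Y] [NormedSpace ℝ Y] : IsClosed {T : X →L[ℝ] Y | Lcc T} := by
  simp only [Lcc, Set.ofPred_forall, ← tendsto_zero_iff_norm_tendsto_zero]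
  exact isClosed_iInter fun x => isClosed_iInter fun _ => isClosed_iInter fun hx =>
    ContinuousLinearMap.isClosed_setOf_tendsto_apply_zero hx.isBounded_range

theorem stmt7_general {X Y : Type*} [NormedAddCommGroup X] [NormedSpace ℝ X]
    [NormedAddCommGroup Y] [NormedSpace ℝ Y]
    (T : ℕ → X →L[ℝ] Y) (S : X →L[ℝ] Y)
    (h1 : ∀ n, Lcc (T n))
    (h2 : Tendsto (fun n => ‖T n - S‖) atTop (𝓝 (0 : ℝ))) :
    Lcc S :=
  isClosed_setOf_lcc.mem_of_tendsto (tendsto_iff_norm_sub_tendsto_zero.2 h2)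
    (Eventually.of_forall h1)

theorem stmt7 {X Y : Type*} [NormedAddCommGroup X] [NormedSpace ℝ X] [CompleteSpace X]
    [NormedAddCommGroup Y] [NormedSpace ℝ Y] [CompleteSpace Y]
    (T : ℕ → X →L[ℝ] Y) (S : X →L[ℝ] Y)
    (h1 : ∀ n, Lcc (T n))
    (h2 : Tendsto (fun n => ‖T n - S‖) atTop (𝓝 (0 : ℝ))) :
    Lcc S :=
  stmt7_general T S h1 h2
end

section
/- Let K be a compact Hausdorff space, X a Banach space, φ ∈ C(K), and T : C(K,X) → Y a limited completely continuous operator. Then the operator T_φ : X → Y defined by T_φ(x) = T(φ·x) is limited completely continuous. -/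
open Filter Topology

section Aux

variable {K X : Type*} [TopologicalSpace K] [CompactSpace K]
  [NormedAddCommGroup X] [NormedSpace ℝ X]

/-- The operator `x ↦ φ · x` from `X` to `C(K, X)`. -/
noncomputable def mulCLM (φ : C(K, ℝ)) : X →L[ℝ] C(K, X) :=
  LinearMap.mkContinuous
    { toFun := fun x => ContinuousMap.mk (fun t => φ t • x)
        ((map_continuous φ).smul continuous_const)
      map_add' := by intro a b; ext t; simp [smul_add]
      map_smul' := by
        intro c a; ext t
        show φ t • c • a = c • φ t • a
        exact smul_comm _ _ _ }
    ‖φ‖ (by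
      intro x
      refine ContinuousMap.norm_le _ (by positivity) |>.mpr fun t => ?_
      calc ‖φ t • x‖ = |φ t| * ‖x‖ := by simp [norm_smul]
        _ ≤ ‖φ‖ * ‖x‖ := by
            gcongr
            simpa using φ.norm_coe_le_norm t)

end Aux

theorem stmt17 {K X Y : Type*} [TopologicalSpace K] [CompactSpace K] [T2Space K]
    [NormedAddCommGroup X] [NormedSpace ℝ X] [CompleteSpace X]
    [NormedAddCommGroup Y] [NormedSpace ℝ Y] [CompleteSpace Y]
    (φ : C(K, ℝ)) (T : C(K, X) →L[ℝ] Y)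
    (hT : ∀ f : ℕ → C(K, X), IsLimitedSet (Set.range f) → WeaklyNull f →
      Tendsto (fun n => ‖T (f n)‖) atTop (𝓝 (0 : ℝ))) :
    ∀ x : ℕ → X, IsLimitedSet (Set.range x) → WeaklyNull x →
      Tendsto (fun n => ‖T (ContinuousMap.mk (fun t => φ t • x n)
        ((map_continuous φ).smul continuous_const))‖) atTop (𝓝 (0 : ℝ)) := by
  intro x hlim hwn
  have key : ∀ n, (ContinuousMap.mk (fun t => φ t • x n)
      ((map_continuous φ).smul continuous_const)) = mulCLM φ (x n) := fun n => rfl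
  simp only [key]
  apply hT
  · intro g hg ε hε
    obtain ⟨N, hN⟩ := hlim (fun k => (g k).comp (mulCLM φ))
      (fun z => hg (mulCLM φ z)) ε hε
    refine ⟨N, fun k hk a ha => ?_⟩
    obtain ⟨n, rfl⟩ := ha
    exact hN k hk (x n) ⟨n, rfl⟩
  · intro f
    exact hwn (f.comp (mulCLM φ))
end
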